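/- arXiv:2102.07283 — 7 statements merged into one kernel-verified Lean document; each statement's English description precedes it below -/
import Mathlib

section
/- Let f : B(0,1) ⊆ ℝⁿ → ℝⁿ be C¹ on the open unit ball with f(0) = 0, and suppose there is c₅ > 0 such that the minimum norm m(Df(x)) = inf_{v≠0} |Df(x)v|/|v| satisfies m(Df(x)) > c₅ for all x ∈ B(0,1). If c₅ > 2r, then the ball B(0,r) is contained in f(B(0,1)). -/
open Metric Set Filter Topology
open scoped NNReal

/-!
Near each point `x` of the ball, `f` is approximated by its derivative, which is invertible with
inverse of norm at most `1 / c₅`; the surjectivity estimate for approximately linear maps then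
gives `closedBall (f x) (c₅ δ / 2) ⊆ f '' closedBall x δ` for small `δ`. With this local rate the
segment from `f 0 = 0` to `y` lifts by continuous induction: the set of times up to which a lift
exists is closed by compactness and extends to the right, so `y` is the image of a point of norm
less than `2 ‖y‖ / c₅ < 1`.
-/

def CoversSmallBallsOn {E F : Type*} [PseudoMetricSpace E] [PseudoMetricSpace F] (f : E → F)
    (c : ℝ) (U : Set E) : Prop :=
  ∀ x ∈ U, ∀ᶠ δ in 𝓝[>] 0, closedBall (f x) (c * δ) ⊆ f '' closedBall x δ

namespace CoversSmallBallsOn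

variable {E F : Type*} [PseudoMetricSpace E] [ProperSpace E] [NormedAddCommGroup F]
  [NormedSpace ℝ F] {f : E → F} {c : ℝ} {U : Set E}

theorem add_smul_mem_image_closedBall (hfU : CoversSmallBallsOn f c U) (hf : ContinuousOn f U)
    {x₀ : E} {s : ℝ} (hs : 0 ≤ s) (hU : closedBall x₀ s ⊆ U) {v : F} (hv : ‖v‖ ≤ c) :
    f x₀ + s • v ∈ f '' closedBall x₀ s := by
  -- `(t, x) ∈ C` records a lift `x` of `f x₀ + t • v` at distance at most `t` from `x₀`
  set C : Set (ℝ × E) := {p | p.1 ∈ Icc 0 s ∧ dist p.2 x₀ ≤ p.1} ∩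
    (fun p => f p.2 - p.1 • v) ⁻¹' {f x₀}
  have hC : IsCompact C := by
    have hK : {p : ℝ × E | p.1 ∈ Icc 0 s ∧ dist p.2 x₀ ≤ p.1} ⊆ Icc 0 s ×ˢ closedBall x₀ s :=
      fun p hp => ⟨hp.1, hp.2.trans hp.1.2⟩
    refine ((isCompact_Icc.prod (isCompact_closedBall x₀ s)).of_isClosed_subset ?_
      (inter_subset_left.trans hK))
    refine ContinuousOn.preimage_isClosed_of_isClosed ?_
      ((isClosed_Icc.preimage continuous_fst).inter
        (isClosed_le (continuous_snd.dist continuous_const) continuous_fst)) isClosed_singleton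
    exact (hf.comp continuous_snd.continuousOn fun p hp => hU (hK hp).2).sub
      (continuous_fst.smul continuous_const).continuousOn
  have hsC : s ∈ Prod.fst '' C := by
    refine IsClosed.mem_of_ge_of_forall_exists_gt ?_ ⟨(0, x₀), by simp [C, hs], rfl⟩ hs ?_
    · rw [inter_eq_left.2 (image_subset_iff.2 fun p hp => hp.1.1)]
      exact (hC.image continuous_fst).isClosed
    rintro _ ⟨⟨⟨t, x⟩, ⟨⟨-, hxt⟩, hfx⟩, rfl⟩, -, hts⟩
    simp only [mem_preimage, mem_singleton_iff] at hfx
    obtain ⟨δ, hδ, hδ0, hδs⟩ :=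
      ((hfU x (hU (hxt.trans hts.le))).and (Ioc_mem_nhdsGT (sub_pos.2 hts))).exists
    obtain ⟨x', hx', hfx'⟩ : f x₀ + (t + δ) • v ∈ f '' closedBall x δ := by
      refine hδ ?_
      rw [mem_closedBall, ← hfx, dist_eq_norm, add_smul, ← add_assoc, sub_add_cancel,
        add_sub_cancel_left, norm_smul, Real.norm_of_nonneg hδ0.le, mul_comm c]
      exact mul_le_mul_of_nonneg_left hv hδ0.le
    have hx'x₀ : dist x' x₀ ≤ t + δ := by
      linarith [dist_triangle x' x x₀, mem_closedBall.1 hx']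
    refine ⟨t + δ, ⟨(t + δ, x'), ⟨⟨⟨dist_nonneg.trans hx'x₀, by linarith⟩, hx'x₀⟩,
      by simp [hfx']⟩, rfl⟩, by linarith, by linarith⟩
  obtain ⟨⟨_, x⟩, ⟨⟨-, hx⟩, hfx⟩, rfl⟩ := hsC
  exact ⟨x, hx, sub_eq_iff_eq_add.1 hfx⟩

theorem ball_subset_image_ball (hfU : CoversSmallBallsOn f c U) (hf : ContinuousOn f U)
    (hc : 0 < c) {x₀ : E} {ρ : ℝ} (hρ : ball x₀ ρ ⊆ U) :
    ball (f x₀) (c * ρ) ⊆ f '' ball x₀ ρ := by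
  intro y hy
  obtain ⟨s, hys, hsρ⟩ : ∃ s, dist y (f x₀) / c < s ∧ s < ρ :=
    exists_between ((div_lt_iff₀' hc).2 hy)
  have hs : 0 < s := (div_nonneg dist_nonneg hc.le).trans_lt hys
  have hv : ‖s⁻¹ • (y - f x₀)‖ ≤ c := by
    rw [norm_smul, norm_inv, Real.norm_of_nonneg hs.le, ← dist_eq_norm, inv_mul_le_iff₀ hs]
    exact ((div_lt_iff₀ hc).1 hys).le
  obtain ⟨x, hx, hfx⟩ :=
    hfU.add_smul_mem_image_closedBall hf hs.le ((closedBall_subset_ball hsρ).trans hρ) hv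
  refine ⟨x, (mem_closedBall.1 hx).trans_lt hsρ, ?_⟩
  rw [hfx, smul_inv_smul₀ hs.ne', add_sub_cancel]

end CoversSmallBallsOn

theorem HasStrictFDerivAt.eventually_closedBall_subset_image {𝕜 E F : Type*}
    [NontriviallyNormedField 𝕜] [NormedAddCommGroup E] [NormedSpace 𝕜 E] [CompleteSpace E]
    [NormedAddCommGroup F] [NormedSpace 𝕜 F] {f : E → F} {A : E →L[𝕜] F} {x : E}
    (hf : HasStrictFDerivAt f A x) (rinv : A.NonlinearRightInverse) {c : ℝ≥0}
    (hc : c < rinv.nnnorm⁻¹) :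
    ∀ᶠ δ in 𝓝[>] 0, closedBall (f x) (c * δ) ⊆ f '' closedBall x δ := by
  obtain ⟨t, ht, hA⟩ :=
    hf.approximates_deriv_on_nhds (c := rinv.nnnorm⁻¹ - c) (Or.inr (tsub_pos_of_lt hc))
  obtain ⟨ε, hε, hεt⟩ := nhds_basis_closedBall.mem_iff.1 ht
  filter_upwards [Ioc_mem_nhdsGT hε] with δ hδ
  have := (hA.mono_set ((closedBall_subset_closedBall hδ.2).trans hεt))
    |>.surjOn_closedBall_of_nonlinearRightInverse rinv hδ.1.le subset_rfl
  rwa [NNReal.coe_sub hc.le, NNReal.coe_inv, sub_sub_cancel] at this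

noncomputable def ContinuousLinearMap.nonlinearRightInverseOfLowerBound {𝕜 E : Type*}
    [NontriviallyNormedField 𝕜] [NormedAddCommGroup E] [NormedSpace 𝕜 E] [FiniteDimensional 𝕜 E]
    (A : E →L[𝕜] E) {c : ℝ≥0} (hc : 0 < c) (hA : ∀ v, c * ‖v‖ ≤ ‖A v‖) :
    A.NonlinearRightInverse :=
  have hsurj : Function.Surjective A := LinearMap.surjective_of_injective (f := A.toLinearMap)
    fun v w hvw => by
      have := hA (v - w)
      rw [map_sub, show A v = A w from hvw, sub_self, norm_zero] at this
      exact sub_eq_zero.1 <| norm_le_zero_iff.1 <|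
        nonpos_of_mul_nonpos_right this (NNReal.coe_pos.2 hc)
  { toFun := Function.surjInv hsurj
    nnnorm := c⁻¹
    bound' := fun z => by
      have := hA (Function.surjInv hsurj z)
      rw [Function.surjInv_eq hsurj z] at this
      rw [NNReal.coe_inv, inv_mul_eq_div, le_div_iff₀' (NNReal.coe_pos.2 hc)]
      exact this
    right_inv' := Function.surjInv_eq hsurj }

/-- Covering lemma: a C¹ map on the unit ball of ℝⁿ fixing the origin whose
derivative has minimum norm greater than `c₅ > 2r` covers the ball of radius `r`. -/
theorem stmt_0 (n : ℕ) (f : EuclideanSpace ℝ (Fin n) → EuclideanSpace ℝ (Fin n))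
    (hf : ContDiffOn ℝ 1 f (ball 0 1)) (hf0 : f 0 = 0) (c₅ r : ℝ) (hc₅ : 0 < c₅)
    (hder : ∀ x ∈ ball (0 : EuclideanSpace ℝ (Fin n)) 1,
      ∀ v : EuclideanSpace ℝ (Fin n), v ≠ 0 → c₅ * ‖v‖ < ‖fderivWithin ℝ f (ball 0 1) x v‖)
    (hr : c₅ > 2 * r) :
    ball (0 : EuclideanSpace ℝ (Fin n)) r ⊆ f '' ball 0 1 := by
  set c : ℝ≥0 := ⟨c₅, hc₅.le⟩
  have hc : 0 < c := hc₅
  have hcover : CoversSmallBallsOn f (c / 2 : ℝ≥0) (ball 0 1) := by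
    intro x hx
    have hA : ∀ v, c * ‖v‖ ≤ ‖fderiv ℝ f x v‖ := by
      intro v
      rcases eq_or_ne v 0 with rfl | hv
      · simp
      · change c₅ * ‖v‖ ≤ _
        simpa [fderivWithin_of_isOpen isOpen_ball hx] using (hder x hx v hv).le
    exact ((hf.contDiffAt (isOpen_ball.mem_nhds hx)).hasStrictFDerivAt one_ne_zero)
      |>.eventually_closedBall_subset_image
        (ContinuousLinearMap.nonlinearRightInverseOfLowerBound _ hc hA)
      (by simpa [ContinuousLinearMap.nonlinearRightInverseOfLowerBound] using hc)
  calc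
    ball 0 r ⊆ ball (f 0) ((c / 2 : ℝ≥0) * 1) := by
      rw [hf0, NNReal.coe_div, mul_one]
      exact ball_subset_ball (show r ≤ c₅ / 2 by linarith)
    _ ⊆ f '' ball 0 1 :=
      hcover.ball_subset_image_ball hf.continuousOn (NNReal.coe_pos.2 (half_pos hc)) subset_rfl
end

section
/- Let (t,v), (t',v') ∈ (ℝ \ {0}) × (ℝ/2πℤ), with real representatives w, w' of v, v'. The subgroup E = { m·(t,v) + n·(t',v') : m, n ∈ ℤ } is dense in ℝ × (ℝ/2πℤ) if and only if there is no (β₁, β₂) ∈ ℤ² \ {0} such that β₁·(t/t') + β₂·(w − w'·(t/t'))·(1/(2π)) ∈ ℤ (with the normalization that the circle has circumference 2π). -/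
/-!
A continuous character of `ℝ × ℝ/pℤ` is `(x, y) ↦ c x + n y mod p`, and after eliminating `c`
an integer relation `β` as in the statement is exactly a nontrivial such character killing
both generators. So the theorem says that a subgroup is dense iff no
nontrivial character kills it, and only the converse needs work: a proper closed subgroup `C`
is killed by a nontrivial character. If the projection of `C` to `ℝ` (closed, the circle being
compact) is proper, it lies in some `aℤ` and `x ↦ (p / a) x` does. Otherwise the vertical fibre
`{r | (0, r) ∈ C}` is a proper closed subgroup of `ℝ`, so it lies in some `aℤ ∋ p = l a`; then
`l y` is a function of `x` on `C` with closed graph, hence a continuous homomorphism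
`ℝ → ℝ/pℤ`, which lifts to a linear map `x ↦ c x`, and `(-c, l)` does.
-/

open Real

theorem AddSubgroup.exists_ne_zero_le_zmultiples_of_isClosed {H : AddSubgroup ℝ}
    (hH : IsClosed (H : Set ℝ)) (hne : H ≠ ⊤) : ∃ a ≠ 0, H ≤ AddSubgroup.zmultiples a := by
  rcases H.dense_or_cyclic with hd | ⟨g, rfl⟩
  · exact absurd (SetLike.coe_injective (hH.closure_eq.symm.trans hd.closure_eq)) hne
  · rcases eq_or_ne g 0 with rfl | hg
    · exact ⟨1, one_ne_zero, by simp⟩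
    · exact ⟨g, hg, (AddSubgroup.zmultiples_eq_closure g).ge⟩

theorem AddSubgroup.exists_continuous_addMonoidHom_of_isClosed {X K L : Type*}
    [TopologicalSpace X] [AddGroup X] [TopologicalSpace K] [AddGroup K] [CompactSpace K]
    [TopologicalSpace L] [AddGroup L] (C : AddSubgroup (X × K)) (hC : IsClosed (C : Set (X × K)))
    (ρ : K →+ L) (hρ : Continuous ρ) (hfst : ∀ x, ∃ y, (x, y) ∈ C)
    (hker : ∀ y, ((0 : X), y) ∈ C → ρ y = 0) :
    ∃ Φ : X →+ L, Continuous Φ ∧ ∀ q ∈ C, ρ q.2 = Φ q.1 := by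
  choose Y hY using hfst
  have hρY : ∀ q ∈ C, ρ q.2 = ρ (Y q.1) := by
    rintro ⟨x, y⟩ hq
    have := C.add_mem (C.neg_mem (hY x)) hq
    rw [Prod.neg_mk, Prod.mk_add_mk, neg_add_cancel] at this
    have h := hker _ this
    rw [map_add, map_neg, neg_add_eq_zero] at h
    exact h.symm
  let Φ : X →+ L := AddMonoidHom.mk' (fun x => ρ (Y x)) fun x x' => by
    rw [← map_add, ← hρY (x + x', Y x + Y x') (C.add_mem (hY x) (hY x'))]
  refine ⟨Φ, continuous_iff_isClosed.mpr fun F hF => ?_, hρY⟩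
  have hpre : Φ ⁻¹' F = Prod.fst '' ((C : Set (X × K)) ∩ Prod.snd ⁻¹' (ρ ⁻¹' F)) := by
    ext x
    constructor
    · exact fun hx => ⟨(x, Y x), ⟨hY x, hx⟩, rfl⟩
    · rintro ⟨q, ⟨hq, hqF⟩, rfl⟩
      simpa [Φ, ← hρY q hq] using hqF
  rw [hpre]
  exact isClosedMap_fst_of_compactSpace _ (hC.inter (hF.preimage (hρ.comp continuous_snd)))

theorem AddCircle.exists_eq_coe_mul_of_continuous {p : ℝ} [Fact (0 < p)] (Φ : ℝ →+ AddCircle p)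
    (hΦ : Continuous Φ) : ∃ c : ℝ, ∀ x, Φ x = ↑(c * x) := by
  have cov := AddCircle.isCoveringMap_coe (𝕜 := ℝ) p
  obtain ⟨F, ⟨hF0, hF⟩, -⟩ := cov.existsUnique_continuousMap_lifts ⟨Φ, hΦ⟩ 0 0 (by simp)
  have hFΦ : ∀ x, ((F x : ℝ) : AddCircle p) = Φ x := congrFun hF
  -- Both sides lift `x ↦ Φ (x + y)` and agree at `x = 0`.
  have hadd : ∀ x y, F (x + y) = F x + F y := fun x y => by
    refine congrFun (cov.eq_of_comp_eq (g₂ := fun x => F x + F y)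
      (F.continuous.comp (continuous_add_const y)) (F.continuous.add continuous_const)
      (funext fun x => ?_) 0 (by simp [hF0])) x
    simp only [Function.comp_apply, QuotientAddGroup.mk_add, hFΦ, map_add]
  refine ⟨F 1, fun x => ?_⟩
  have := map_real_smul (AddMonoidHom.mk' F hadd) F.continuous x 1
  simp only [AddMonoidHom.mk'_apply, smul_eq_mul, mul_one] at this
  rw [← hFΦ, this, mul_comm]

namespace AddCircle

variable {p : ℝ}

def prodChar (p c : ℝ) (n : ℤ) : ℝ × AddCircle p →+ AddCircle p :=
  ((QuotientAddGroup.mk' (AddSubgroup.zmultiples p)).comp (AddMonoidHom.mulLeft c)).coprod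
    (zsmulAddGroupHom n)

@[simp]
theorem prodChar_apply (c : ℝ) (n : ℤ) (q : ℝ × AddCircle p) :
    prodChar p c n q = ↑(c * q.1) + n • q.2 := rfl

theorem continuous_prodChar (c : ℝ) (n : ℤ) : Continuous (prodChar p c n) :=
  ((AddCircle.continuous_mk' p).comp (continuous_const.mul continuous_fst)).add
    ((continuous_zsmul n).comp continuous_snd)

theorem prodChar_mk_coe_eq_zero_iff (c : ℝ) (n : ℤ) (x y : ℝ) :
    prodChar p c n (x, ↑y) = 0 ↔ ∃ k : ℤ, c * x + n * y = k * p := by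
  rw [prodChar_apply, ← coe_zsmul, ← coe_add, coe_eq_zero_iff]
  simp [zsmul_eq_mul, eq_comm]

theorem prodChar_eq_zero_iff [Fact (0 < p)] (c : ℝ) (n : ℤ) :
    prodChar p c n = 0 ↔ c = 0 ∧ n = 0 := by
  refine ⟨fun h => ?_, by rintro ⟨rfl, rfl⟩; ext; simp⟩
  have hhalf : ((p / 2 : ℝ) : AddCircle p) ≠ 0 := by
    intro h0
    have := addOrderOf_period_div (p := p) (n := 2) two_pos
    rw [Nat.cast_ofNat, h0, addOrderOf_zero] at this
    exact absurd this (by norm_num)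
  have hc : c = 0 := by
    by_contra hc
    apply hhalf
    simpa [mul_div_cancel₀ _ hc] using DFunLike.congr_fun h (p / 2 / c, 0)
  refine ⟨hc, by_contra fun hn => hhalf ?_⟩
  have hn' : (n : ℝ) ≠ 0 := Int.cast_ne_zero.mpr hn
  simpa [hc, ← coe_zsmul, zsmul_eq_mul, mul_div_cancel₀ _ hn'] using
    DFunLike.congr_fun h (0, ((p / 2 / n : ℝ) : AddCircle p))

theorem exists_prodChar_of_isClosed_of_forall_exists [Fact (0 < p)]
    {C : AddSubgroup (ℝ × AddCircle p)} (hC : IsClosed (C : Set (ℝ × AddCircle p)))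
    (hne : C ≠ ⊤) (hfst : ∀ x : ℝ, ∃ y, (x, y) ∈ C) :
    ∃ c : ℝ, ∃ n : ℤ, n ≠ 0 ∧ ∀ q ∈ C, prodChar p c n q = 0 := by
  let W := C.comap ((AddMonoidHom.inr ℝ (AddCircle p)).comp (QuotientAddGroup.mk' _))
  have hW : IsClosed (W : Set ℝ) :=
    hC.preimage (continuous_const.prodMk (AddCircle.continuous_mk' p))
  have hWne : W ≠ ⊤ := by
    refine fun hW => hne (eq_top_iff.mpr fun ⟨x, y⟩ _ => ?_)
    obtain ⟨y', hy'⟩ := hfst x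
    obtain ⟨r, hr⟩ := QuotientAddGroup.mk_surjective (y - y')
    have : r ∈ W := hW ▸ AddSubgroup.mem_top r
    simpa [hr] using C.add_mem hy' this
  obtain ⟨a, ha, hWa⟩ := AddSubgroup.exists_ne_zero_le_zmultiples_of_isClosed hW hWne
  have hpW : p ∈ W := show ((0 : ℝ), ((p : ℝ) : AddCircle p)) ∈ C by
    rw [coe_period]
    exact C.zero_mem
  obtain ⟨l, hl⟩ := AddSubgroup.mem_zmultiples_iff.mp (hWa hpW)
  -- `C ∩ ({0} × ℝ/pℤ)` lies in `aℤ/pℤ` with `p = l a`, so on `C` the value `l • y` depends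
  -- only on `x`.
  have hker : ∀ y, ((0 : ℝ), y) ∈ C → zsmulAddGroupHom l y = 0 := by
    intro y hy
    obtain ⟨r, rfl⟩ := QuotientAddGroup.mk_surjective y
    obtain ⟨m, rfl⟩ := AddSubgroup.mem_zmultiples_iff.mp (hWa hy)
    rw [zsmulAddGroupHom_apply, ← coe_zsmul, smul_comm, hl, coe_eq_zero_iff]
    exact ⟨m, rfl⟩
  obtain ⟨Φ, hΦ, hCΦ⟩ :=
    C.exists_continuous_addMonoidHom_of_isClosed hC _ (continuous_zsmul l) hfst hker
  obtain ⟨c, hc⟩ := exists_eq_coe_mul_of_continuous Φ hΦ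
  refine ⟨-c, l, ?_, fun q hq => ?_⟩
  · rintro rfl
    exact (Fact.out : 0 < p).ne' (by simpa using hl.symm)
  · have := hCΦ q hq
    rw [zsmulAddGroupHom_apply, hc] at this
    simp [this]

theorem exists_prodChar_of_isClosed_ne_top [Fact (0 < p)] {C : AddSubgroup (ℝ × AddCircle p)}
    (hC : IsClosed (C : Set (ℝ × AddCircle p))) (hne : C ≠ ⊤) :
    ∃ c : ℝ, ∃ n : ℤ, (c ≠ 0 ∨ n ≠ 0) ∧ ∀ q ∈ C, prodChar p c n q = 0 := by
  by_cases hfst : ∀ x : ℝ, ∃ y, (x, y) ∈ C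
  · obtain ⟨c, n, hn, hχ⟩ := exists_prodChar_of_isClosed_of_forall_exists hC hne hfst
    exact ⟨c, n, Or.inr hn, hχ⟩
  have hH : C.map (AddMonoidHom.fst _ _) ≠ ⊤ := fun h => hfst fun x => by
    simpa using (show x ∈ C.map (AddMonoidHom.fst _ _) by rw [h]; trivial)
  obtain ⟨a, ha, hHa⟩ := AddSubgroup.exists_ne_zero_le_zmultiples_of_isClosed
    (by simpa [AddSubgroup.coe_map] using isClosedMap_fst_of_compactSpace _ hC) hH
  refine ⟨p / a, 0, Or.inl (div_ne_zero (Fact.out : 0 < p).ne' ha), fun q hq => ?_⟩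
  obtain ⟨m, hm⟩ := AddSubgroup.mem_zmultiples_iff.mp (hHa (AddSubgroup.mem_map_of_mem _ hq))
  rw [AddMonoidHom.coe_fst] at hm
  rw [prodChar_apply, ← hm, zero_smul, add_zero, coe_eq_zero_iff]
  exact ⟨m, by simp only [zsmul_eq_mul]; field_simp⟩

theorem dense_iff_forall_prodChar [Fact (0 < p)] (S : AddSubgroup (ℝ × AddCircle p)) :
    Dense (S : Set (ℝ × AddCircle p)) ↔
      ¬ ∃ c : ℝ, ∃ n : ℤ, (c ≠ 0 ∨ n ≠ 0) ∧ ∀ q ∈ S, prodChar p c n q = 0 := by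
  constructor
  · rintro hS ⟨c, n, hcn, hχ⟩
    have hχ0 : prodChar p c n = 0 :=
      DFunLike.coe_injective ((continuous_prodChar c n).ext_on hS continuous_const hχ)
    rw [prodChar_eq_zero_iff] at hχ0
    tauto
  · refine fun h => dense_iff_closure_eq.mpr ?_
    by_contra hS
    refine h ?_
    obtain ⟨c, n, hcn, hχ⟩ := exists_prodChar_of_isClosed_ne_top S.isClosed_topologicalClosure
      fun h => hS (by rw [← AddSubgroup.topologicalClosure_coe, h, AddSubgroup.coe_top])
    exact ⟨c, n, hcn, fun q hq => hχ q (S.le_topologicalClosure hq)⟩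

theorem exists_prodChar_pair_eq_zero_iff {t t' w w' : ℝ} (hp : p ≠ 0) (ht' : t' ≠ 0) :
    (∃ c : ℝ, ∃ n : ℤ, (c ≠ 0 ∨ n ≠ 0) ∧
        prodChar p c n (t, ↑w) = 0 ∧ prodChar p c n (t', ↑w') = 0) ↔
      ∃ β : ℤ × ℤ, β ≠ 0 ∧
        ∃ k : ℤ, (β.1 : ℝ) * (t / t') + (β.2 : ℝ) * ((w - w' * (t / t')) / p) = k := by
  simp only [prodChar_mk_coe_eq_zero_iff]
  constructor
  · rintro ⟨c, n, hcn, ⟨k₁, h₁⟩, k₂, h₂⟩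
    refine ⟨(k₂, n), fun hβ => ?_, k₁, ?_⟩
    · obtain ⟨rfl, rfl⟩ := Prod.mk_eq_zero.mp hβ
      simp only [Int.cast_zero, zero_mul, add_zero, mul_eq_zero, ht', or_false] at h₂
      simp [h₂] at hcn
    · field_simp
      linear_combination t' * h₁ - t * h₂
  · rintro ⟨⟨b₁, b₂⟩, hβ, k, hk⟩
    refine ⟨(b₁ * p - b₂ * w') / t', b₂, ?_, ⟨k, ?_⟩, b₁, ?_⟩
    · by_contra! h
      obtain ⟨hc, rfl⟩ := h
      simp [div_eq_zero_iff, ht', hp] at hc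
      exact hβ (by simp [hc])
    · field_simp at hk ⊢
      linear_combination hk
    · field_simp
      ring

end AddCircle

theorem stmt_2_general (t t' w w' : ℝ) (ht' : t' ≠ 0) :
    Dense {p : ℝ × AddCircle (2 * π) |
        ∃ m n : ℤ, p = m • ((t, (w : AddCircle (2 * π))) : ℝ × AddCircle (2 * π))
          + n • ((t', (w' : AddCircle (2 * π))) : ℝ × AddCircle (2 * π))} ↔
      ¬ ∃ β : ℤ × ℤ, β ≠ 0 ∧
        ∃ k : ℤ, (β.1 : ℝ) * (t / t') + (β.2 : ℝ) * ((w - w' * (t / t')) / (2 * π)) = k := by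
  have : Fact (0 < 2 * π) := ⟨two_pi_pos⟩
  set u : ℝ × AddCircle (2 * π) := (t, w)
  set v : ℝ × AddCircle (2 * π) := (t', w')
  have hE : {p | ∃ m n : ℤ, p = m • u + n • v} = AddSubgroup.closure {u, v} := by
    ext q
    simp [AddSubgroup.mem_closure_pair, eq_comm]
  have hclosure (χ : ℝ × AddCircle (2 * π) →+ AddCircle (2 * π)) :
      (∀ q ∈ AddSubgroup.closure {u, v}, χ q = 0) ↔ χ u = 0 ∧ χ v = 0 := by
    simpa only [SetLike.le_def, Set.pair_subset_iff, SetLike.mem_coe, AddMonoidHom.mem_ker] using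
      AddSubgroup.closure_le χ.ker (k := {u, v})
  rw [hE, AddCircle.dense_iff_forall_prodChar,
    ← AddCircle.exists_prodChar_pair_eq_zero_iff two_pi_pos.ne' ht']
  simp only [hclosure, u, v]

/-- Density criterion for the subgroup generated by two elements of ℝ × (ℝ/2πℤ). -/
theorem stmt_2 (t t' w w' : ℝ) (ht : t ≠ 0) (ht' : t' ≠ 0) :
    Dense {p : ℝ × AddCircle (2 * π) |
        ∃ m n : ℤ, p = m • ((t, (w : AddCircle (2 * π))) : ℝ × AddCircle (2 * π))
          + n • ((t', (w' : AddCircle (2 * π))) : ℝ × AddCircle (2 * π))} ↔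
      ¬ ∃ β : ℤ × ℤ, β ≠ 0 ∧
        ∃ k : ℤ, (β.1 : ℝ) * (t / t') + (β.2 : ℝ) * ((w - w' * (t / t')) / (2 * π)) = k :=
  stmt_2_general t t' w w' ht'
end

section
/- Kronecker's theorem: a vector (w₁, …, w_k) ∈ 𝕋^k = (ℝ/ℤ)^k generates a dense subgroup of 𝕋^k (under integer multiples) if and only if there is no (a₁, …, a_k) ∈ ℤ^k \ {0} with a₁w₁ + … + a_k w_k = 0 in ℝ/ℤ. -/
/-!
If `∑ aᵢ wᵢ = 0` for some `a ≠ 0`, the continuous homomorphism `x ↦ ∑ aᵢ xᵢ` vanishes on the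
orbit of `w` but not on the whole torus, so the orbit is not dense.

Conversely, if there is no such relation, every nontrivial character `mFourier a` takes a value
`z ≠ 1` at `w`, so its averages along `0, w, 2w, …` are Cesàro means of the geometric series in `z`
and tend to `0`, its Haar integral. The characters span a dense subspace of `C(𝕋ᵏ, ℂ)`
(Stone–Weierstrass) and the averaging functionals have norm `≤ 1`, so the averages of every
continuous function tend to its integral (Weyl's criterion). A continuous function that is
nonnegative, vanishes on the closure of the orbit and is positive somewhere would then have zero
integral, which is absurd.
-/

open MeasureTheory Filter Topology AddCircle Submodule

theorem ContinuousLinearMap.tendsto_apply_of_dense_span {𝕜 E F ι : Type*}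
    [NontriviallyNormedField 𝕜] [SeminormedAddCommGroup E] [NormedSpace 𝕜 E]
    [NormedAddCommGroup F] [NormedSpace 𝕜 F] {l : Filter ι} {A : ι → E →L[𝕜] F} {L : E →L[𝕜] F}
    {C : NNReal} (hA : ∀ i, ‖A i‖₊ ≤ C) {s : Set E} (hs : (span 𝕜 s).topologicalClosure = ⊤)
    (hsA : ∀ v ∈ s, Tendsto (fun i => A i v) l (𝓝 (L v))) (v : E) :
    Tendsto (fun i => A i v) l (𝓝 (L v)) := by
  let S : Submodule 𝕜 E :=
    { carrier := {v | Tendsto (fun i => A i v) l (𝓝 (L v))}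
      add_mem' := fun hu hv => by simpa only [Set.mem_ofPred_eq, map_add] using hu.add hv
      zero_mem' := by simpa only [Set.mem_ofPred_eq, map_zero] using tendsto_const_nhds
      smul_mem' := fun c v hv => by simpa only [Set.mem_ofPred_eq, map_smul] using hv.const_smul c }
  have hS : IsClosed (S : Set E) :=
    (LipschitzWith.uniformEquicontinuous _ C fun i => (A i).lipschitz.weaken (hA i)).equicontinuous
      |>.isClosed_setOfPred_tendsto L.continuous
  have hspan : (span 𝕜 s).topologicalClosure ≤ S :=
    topologicalClosure_minimal _ (span_le.mpr hsA) hS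
  exact hspan (hs ▸ Submodule.mem_top)

lemma tendsto_inv_mul_geom_sum {𝕜 : Type*} [RCLike 𝕜] {z : 𝕜} (hz : ‖z‖ ≤ 1) (h1 : z ≠ 1) :
    Tendsto (fun N : ℕ => (N : 𝕜)⁻¹ * ∑ n ∈ Finset.range N, z ^ n) atTop (𝓝 0) := by
  have hbound (N : ℕ) : ‖∑ n ∈ Finset.range N, z ^ n‖ ≤ 2 / ‖z - 1‖ := by
    rw [geom_sum_eq h1, norm_div]
    gcongr
    calc ‖z ^ N - 1‖ ≤ ‖z‖ ^ N + 1 := by simpa using norm_sub_le (z ^ N) 1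
      _ ≤ 2 := by linarith [pow_le_one₀ (norm_nonneg z) hz (n := N)]
  refine squeeze_zero_norm (fun N => ?_) (tendsto_const_div_atTop_nhds_zero_nat (2 / ‖z - 1‖))
  rw [norm_mul, norm_inv, RCLike.norm_natCast, div_eq_inv_mul _ (N : ℝ)]
  exact mul_le_mul_of_nonneg_left (hbound N) (by positivity)

section Averages

variable {X : Type*} [TopologicalSpace X]

noncomputable def weylAverage (x : ℕ → X) (N : ℕ) : C(X, ℂ) →L[ℂ] ℂ :=
  (N : ℂ)⁻¹ • ∑ n ∈ Finset.range N, ContinuousMap.evalCLM ℂ (x n)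

lemma weylAverage_apply (x : ℕ → X) (N : ℕ) (h : C(X, ℂ)) :
    weylAverage x N h = (N : ℂ)⁻¹ * ∑ n ∈ Finset.range N, h (x n) := by
  simp [weylAverage]

lemma norm_weylAverage_le [CompactSpace X] (x : ℕ → X) (N : ℕ) : ‖weylAverage x N‖ ≤ 1 := by
  refine ContinuousLinearMap.opNorm_le_bound _ zero_le_one fun h => ?_
  rw [weylAverage_apply, norm_mul, norm_inv, Complex.norm_natCast, one_mul]
  rcases N.eq_zero_or_pos with rfl | hN
  · simp
  rw [inv_mul_le_iff₀ (by exact_mod_cast hN)]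
  calc ‖∑ n ∈ Finset.range N, h (x n)‖ ≤ ∑ n ∈ Finset.range N, ‖h‖ :=
        norm_sum_le_of_le _ fun n _ => h.norm_coe_le_norm (x n)
    _ = N * ‖h‖ := by simp

lemma tendsto_weylAverage_one (x : ℕ → X) :
    Tendsto (fun N => weylAverage x N 1) atTop (𝓝 1) :=
  tendsto_const_nhds.congr' <| (eventually_ne_atTop 0).mono fun N hN => by
    simp [weylAverage_apply, hN]

variable [CompactSpace X] [MeasurableSpace X] [OpensMeasurableSpace X]

lemma ContinuousMap.integrable_of_compactSpace {E : Type*} [NormedAddCommGroup E] (μ : Measure X)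
    [IsFiniteMeasure μ] (h : C(X, E)) : Integrable h μ :=
  h.continuous.integrable_of_hasCompactSupport (HasCompactSupport.of_compactSpace _)

noncomputable def ContinuousMap.integralCLM (μ : Measure X) [IsFiniteMeasure μ] :
    C(X, ℂ) →L[ℂ] ℂ :=
  LinearMap.mkContinuous
    { toFun h := ∫ x, h x ∂μ
      map_add' g h := integral_add (g.integrable_of_compactSpace μ) (h.integrable_of_compactSpace μ)
      map_smul' c h := integral_smul c _ }
    (μ.real Set.univ) fun h => by
      simpa [mul_comm] using
        norm_integral_le_of_norm_le_const (μ := μ) (Eventually.of_forall h.norm_coe_le_norm)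

lemma ContinuousMap.integralCLM_apply (μ : Measure X) [IsFiniteMeasure μ] (h : C(X, ℂ)) :
    integralCLM μ h = ∫ x, h x ∂μ := rfl

end Averages

namespace UnitAddTorus

variable {d : Type*} [Fintype d]

lemma mFourier_apply_eq_toCircle (a : d → ℤ) (x : UnitAddTorus d) :
    mFourier a x = toCircle (∑ i, a i • x i) := by
  classical
  simp only [mFourier, ContinuousMap.coe_mk, fourier_apply]
  induction (Finset.univ : Finset d) using Finset.induction_on with
  | empty => simp
  | insert j s hj ih =>
    rw [Finset.prod_insert hj, Finset.sum_insert hj, toCircle_add, Circle.coe_mul, ih]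

lemma mFourier_apply_add (a : d → ℤ) (x y : UnitAddTorus d) :
    mFourier a (x + y) = mFourier a x * mFourier a y := by
  simp only [mFourier_apply_eq_toCircle, Pi.add_apply, smul_add, Finset.sum_add_distrib,
    toCircle_add, Circle.coe_mul]

lemma sum_zsmul_smul_apply {M : Type*} [Monoid M] [DistribMulAction M UnitAddCircle]
    [SMulCommClass ℤ M UnitAddCircle] (a : d → ℤ) (m : M) (x : UnitAddTorus d) :
    ∑ i, a i • (m • x) i = m • ∑ i, a i • x i := by
  simp only [Pi.smul_apply, Finset.smul_sum, smul_comm (a _) m]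

lemma mFourier_apply_nsmul (a : d → ℤ) (x : UnitAddTorus d) (n : ℕ) :
    mFourier a (n • x) = mFourier a x ^ n := by
  rw [mFourier_apply_eq_toCircle, sum_zsmul_smul_apply, toCircle_nsmul, Circle.coe_pow,
    mFourier_apply_eq_toCircle]

lemma norm_mFourier_apply (a : d → ℤ) (x : UnitAddTorus d) : ‖mFourier a x‖ = 1 := by
  rw [mFourier_apply_eq_toCircle, Circle.norm_coe]

lemma mFourier_apply_eq_one_iff {a : d → ℤ} {x : UnitAddTorus d} :
    mFourier a x = 1 ↔ ∑ i, a i • x i = 0 := by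
  rw [mFourier_apply_eq_toCircle, ← Circle.coe_one, Circle.coe_inj, ← toCircle_zero,
    (injective_toCircle one_ne_zero).eq_iff]

lemma exists_sum_zsmul_ne_zero {a : d → ℤ} (ha : a ≠ 0) :
    ∃ x : UnitAddTorus d, ∑ i, a i • x i ≠ 0 := by
  classical
  obtain ⟨j, hj⟩ := Function.ne_iff.mp ha
  refine ⟨Pi.single j ((2 * (a j : ℝ))⁻¹ : ℝ), ?_⟩
  have haj : (a j : ℝ) ≠ 0 := by exact_mod_cast hj
  have hhalf : (a j : ℝ) * (2 * (a j : ℝ))⁻¹ = 1 / 2 := by field_simp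
  rw [Finset.sum_eq_single_of_mem j (Finset.mem_univ j) fun i _ hi => by simp [hi],
    Pi.single_eq_same, ← coe_zsmul, zsmul_eq_mul, hhalf, Ne,
    coe_eq_zero_iff_of_mem_Ico ⟨by norm_num, by norm_num⟩]
  norm_num

lemma integral_mFourier_of_ne_zero (μ : Measure (UnitAddTorus d)) [μ.IsAddRightInvariant]
    {a : d → ℤ} (ha : a ≠ 0) : ∫ x, mFourier a x ∂μ = 0 := by
  obtain ⟨y, hy⟩ := exists_sum_zsmul_ne_zero ha
  refine eq_zero_of_mul_eq_self_left (mt mFourier_apply_eq_one_iff.mp hy) ?_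
  calc mFourier a y * ∫ x, mFourier a x ∂μ = ∫ x, mFourier a (x + y) ∂μ := by
        simp_rw [mFourier_apply_add, integral_mul_const, mul_comm]
    _ = ∫ x, mFourier a x ∂μ := integral_add_right_eq_self _ y

theorem tendsto_weylAverage_integral (μ : Measure (UnitAddTorus d)) [IsProbabilityMeasure μ]
    [μ.IsAddRightInvariant] {x : ℕ → UnitAddTorus d}
    (hx : ∀ a ≠ 0, Tendsto (fun N => weylAverage x N (mFourier a)) atTop (𝓝 0))
    (h : C(UnitAddTorus d, ℂ)) :
    Tendsto (fun N => weylAverage x N h) atTop (𝓝 (∫ t, h t ∂μ)) := by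
  refine ContinuousLinearMap.tendsto_apply_of_dense_span (L := ContinuousMap.integralCLM μ)
    (C := 1) (fun N => by exact_mod_cast norm_weylAverage_le x N) span_mFourier_closure_eq_top ?_ h
  rintro _ ⟨a, rfl⟩
  rw [ContinuousMap.integralCLM_apply]
  rcases eq_or_ne a 0 with rfl | ha
  · simpa [mFourier_zero] using tendsto_weylAverage_one x
  · rw [integral_mFourier_of_ne_zero μ ha]
    exact hx a ha

theorem tendsto_weylAverage_nsmul_mFourier {w : UnitAddTorus d} {a : d → ℤ}
    (hw : ∑ i, a i • w i ≠ 0) :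
    Tendsto (fun N => weylAverage (· • w) N (mFourier a)) atTop (𝓝 0) := by
  simp only [weylAverage_apply, mFourier_apply_nsmul]
  exact tendsto_inv_mul_geom_sum (norm_mFourier_apply a w).le (mt mFourier_apply_eq_one_iff.mp hw)

theorem sum_zsmul_ne_zero_of_dense_zmultiples {w : UnitAddTorus d}
    (hw : Dense (AddSubgroup.zmultiples w : Set (UnitAddTorus d))) {a : d → ℤ} (ha : a ≠ 0) :
    ∑ i, a i • w i ≠ 0 := by
  intro hsum
  obtain ⟨x, hx⟩ := exists_sum_zsmul_ne_zero ha
  have hvanish : (fun x : UnitAddTorus d => ∑ i, a i • x i) = 0 := by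
    refine Continuous.ext_on hw (by fun_prop) continuous_const ?_
    rintro _ ⟨n, rfl⟩
    simp only [sum_zsmul_smul_apply, hsum, smul_zero, Pi.zero_apply]
  exact hx (congr_fun hvanish x)

theorem integral_eq_zero_of_forall_nsmul_eq_zero (μ : Measure (UnitAddTorus d))
    [IsProbabilityMeasure μ] [μ.IsAddRightInvariant] {w : UnitAddTorus d}
    (hw : ∀ a : d → ℤ, a ≠ 0 → ∑ i, a i • w i ≠ 0) {h : C(UnitAddTorus d, ℂ)}
    (hh : ∀ n : ℕ, h (n • w) = 0) :
    ∫ t, h t ∂μ = 0 := by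
  have hlim := tendsto_weylAverage_integral μ
    (fun a ha => tendsto_weylAverage_nsmul_mFourier (hw a ha)) h
  simp only [weylAverage_apply, hh, Finset.sum_const_zero, mul_zero] at hlim
  exact tendsto_nhds_unique hlim tendsto_const_nhds

theorem dense_zmultiples_of_sum_zsmul_ne_zero {w : UnitAddTorus d}
    (hw : ∀ a : d → ℤ, a ≠ 0 → ∑ i, a i • w i ≠ 0) :
    Dense (AddSubgroup.zmultiples w : Set (UnitAddTorus d)) := by
  by_contra hnd
  obtain ⟨x₀, hx₀⟩ : ∃ x₀, x₀ ∉ closure (AddSubgroup.zmultiples w : Set (UnitAddTorus d)) := by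
    simpa [Dense] using hnd
  obtain ⟨f, hf0, hf1, hf01⟩ := exists_continuous_zero_one_of_isCompact
    isClosed_closure.isCompact isClosed_singleton (Set.disjoint_singleton_right.mpr hx₀)
  let μ := Measure.pi fun _ : d => (haarAddCircle : Measure UnitAddCircle)
  have hpos : 0 < ∫ x, f x ∂μ :=
    integral_pos_of_integrable_nonneg_nonzero (x := x₀) f.continuous
      (f.integrable_of_compactSpace μ) (fun x => (hf01 x).1) (by simp [hf1 rfl])
  have hzero : ∫ x, ((f x : ℝ) : ℂ) ∂μ = 0 :=
    integral_eq_zero_of_forall_nsmul_eq_zero μ hw (h := ⟨fun x => f x, by fun_prop⟩)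
      fun n => by simp [hf0 (subset_closure (AddSubgroup.nsmul_mem_zmultiples w n))]
  rw [integral_complex_ofReal, Complex.ofReal_eq_zero] at hzero
  exact hpos.ne' hzero

end UnitAddTorus

open UnitAddTorus in
/-- Kronecker's theorem: `(w₁, …, w_k) ∈ 𝕋^k = (ℝ/ℤ)^k` generates a dense subgroup iff
there is no nonzero integer vector `a` with `∑ aᵢ wᵢ = 0` in `ℝ/ℤ`. -/
theorem stmt_3 (k : ℕ) (w : Fin k → AddCircle (1 : ℝ)) :
    Dense {p : Fin k → AddCircle (1 : ℝ) | ∃ n : ℤ, p = n • w} ↔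
      ¬ ∃ a : Fin k → ℤ, a ≠ 0 ∧ ∑ i, a i • w i = 0 := by
  have horbit :
      {p : Fin k → AddCircle (1 : ℝ) | ∃ n : ℤ, p = n • w} = AddSubgroup.zmultiples w := by
    ext p
    simp [AddSubgroup.mem_zmultiples_iff, eq_comm]
  rw [horbit]
  simp only [not_exists, not_and]
  exact ⟨fun hw _ => sum_zsmul_ne_zero_of_dense_zmultiples hw,
    dense_zmultiples_of_sum_zsmul_ne_zero⟩
end

section
/- Let E be dense in ℝ × 𝕋 where E = { m(t,v) + n(t',v') : m,n ∈ ℤ }, t, t' ∈ ℝ \ {0}, and suppose t/t' > 0. Then the subset { m(t,v) − n(t',v') : m, n ∈ ℤ, m > 0, n > 0 } is also dense in ℝ × 𝕋. -/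
/-!
Since `t / t' > 0`, an element `m • (t, v) + n • (t', v')` whose real coordinate is small and
whose coefficient `m` is large and positive must have `n` large and negative. Only finitely
many pairs with `|m| ≤ M` give a small real coordinate, and removing finitely many points from
the dense group `E` keeps it dense (`ℝ × 𝕋` has no isolated points), so `E` has elements
arbitrarily close to `0` with `|m| > M`; up to a sign these are of the form `p • (t, v) - q • (t', v')`
with `p, q` large. Adding such an element to an approximation `m₀ • (t, v) + n₀ • (t', v')` of
a given point gives an approximation `(m₀ + p) • (t, v) - (q - n₀) • (t', v')` with positive
coefficients.
-/

open Real Filter Topology Set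

instance Prod.perfectSpace_of_left {X Y : Type*} [TopologicalSpace X] [TopologicalSpace Y]
    [PerfectSpace X] : PerfectSpace (X × Y) := by
  refine perfectSpace_iff_forall_not_isolated.2 fun p => ?_
  have : NeBot (𝓝[{p.1}ᶜ ×ˢ univ] p) := by
    rw [← Prod.mk.eta (p := p), nhdsWithin_prod_eq, nhdsWithin_univ]
    infer_instance
  exact this.mono (nhdsWithin_mono _ fun q hq hqp => hq.1 (congrArg Prod.fst hqp))

lemma lt_neg_of_abs_mul_add_mul_lt {t t' ε B m n : ℝ} (hr : 0 < t / t')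
    (h : |m * t + n * t'| < ε) (hm : (B + ε / |t'|) / (t / t') < m) : n < -B := by
  have ht' : t' ≠ 0 := by rintro rfl; simp at hr
  have hsmall : m * (t / t') + n < ε / |t'| := by
    rw [lt_div_iff₀ (abs_pos.2 ht')]
    calc (m * (t / t') + n) * |t'| ≤ |m * (t / t') + n| * |t'| := by gcongr; exact le_abs_self _
      _ = |m * t + n * t'| := by rw [← abs_mul]; congr 1; field_simp
      _ < ε := h
  have hlarge : B + ε / |t'| < m * (t / t') := (div_lt_iff₀ hr).1 hm
  linarith

lemma finite_setOf_abs_le_and_abs_mul_add_mul_lt (t : ℝ) {t' : ℝ} (ht' : t' ≠ 0) (ε : ℝ)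
    (M : ℤ) : {p : ℤ × ℤ | |p.1| ≤ M ∧ |p.1 * t + p.2 * t'| < ε}.Finite := by
  set N : ℤ := ⌈(ε + M * |t|) / |t'|⌉
  refine ((finite_Icc (-M) M).prod (finite_Icc (-N) N)).subset ?_
  rintro ⟨m, n⟩ ⟨hm, hmn⟩
  have hmR : |(m : ℝ)| ≤ M := by exact_mod_cast hm
  have hn : |(n : ℝ)| ≤ (ε + M * |t|) / |t'| := by
    rw [le_div_iff₀ (abs_pos.2 ht'), ← abs_mul]
    calc |(n : ℝ) * t'| ≤ |m * t + n * t'| + |m * t| := by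
          simpa using abs_sub (m * t + n * t') (m * t)
      _ ≤ ε + M * |t| := by rw [abs_mul]; gcongr
  have hnN : |n| ≤ N := by exact_mod_cast hn.trans (Int.le_ceil _)
  exact ⟨abs_le.1 hm, abs_le.1 hnN⟩

section

variable {X : Type*} [NormedAddCommGroup X]

lemma abs_fst_zsmul_add_zsmul_le (t t' : ℝ) (v v' : X) (m n : ℤ) :
    |m * t + n * t'| ≤ ‖m • ((t, v) : ℝ × X) + n • (t', v')‖ := by
  simp [zsmul_eq_mul]

lemma exists_lt_lt_norm_zsmul_sub_zsmul_lt {t t' : ℝ} {v v' : X} (hr : 0 < t / t')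
    (hdense : Dense {p : ℝ × X | ∃ m n : ℤ, p = m • ((t, v) : ℝ × X) + n • ((t', v') : ℝ × X)})
    {ε : ℝ} (hε : 0 < ε) (B : ℤ) :
    ∃ p q : ℤ, B < p ∧ B < q ∧ ‖p • ((t, v) : ℝ × X) - q • ((t', v') : ℝ × X)‖ < ε := by
  have ht' : t' ≠ 0 := by rintro rfl; simp at hr
  set M : ℤ := max B ⌈(B + ε / |t'|) / (t / t')⌉
  have of_lt : ∀ m n : ℤ, M < m → ‖m • ((t, v) : ℝ × X) + n • (t', v')‖ < ε →
      ∃ p q : ℤ, B < p ∧ B < q ∧ ‖p • ((t, v) : ℝ × X) - q • ((t', v') : ℝ × X)‖ < ε := by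
    intro m n hm hmn
    have hmC : (B + ε / |t'|) / (t / t') < m :=
      (Int.le_ceil _).trans_lt (by exact_mod_cast (le_max_right _ _).trans_lt hm)
    have hn : (n : ℝ) < -B := lt_neg_of_abs_mul_add_mul_lt hr
      ((abs_fst_zsmul_add_zsmul_le t t' v v' m n).trans_lt hmn) hmC
    refine ⟨m, -n, (le_max_left _ _).trans_lt hm, by linarith [(by exact_mod_cast hn : n < -B)],
      by simpa only [neg_zsmul, sub_neg_eq_add] using hmn⟩
  set f : ℤ × ℤ → ℝ × X := fun p => p.1 • ((t, v) : ℝ × X) + p.2 • (t', v')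
  have hF := (finite_setOf_abs_le_and_abs_mul_add_mul_lt t ht' ε M).image f
  obtain ⟨g, hg, ⟨⟨m, n, rfl⟩, hgF⟩⟩ := Metric.dense_iff.1 (hdense.sdiff_finite hF) 0 ε hε
  rw [Metric.mem_ball, dist_zero_right] at hg
  have hM : M < |m| := by
    by_contra! hm
    exact hgF ⟨(m, n), ⟨hm, (abs_fst_zsmul_add_zsmul_le t t' v v' m n).trans_lt hg⟩, rfl⟩
  rcases lt_abs.1 hM with hm | hm
  · exact of_lt m n hm hg
  · exact of_lt (-m) (-n) hm (by rwa [neg_zsmul, neg_zsmul, ← neg_add, norm_neg])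

end

theorem stmt_5_general (t t' : ℝ) (v v' : AddCircle (2 * π))
    (hpos : 0 < t / t')
    (hdense : Dense {p : ℝ × AddCircle (2 * π) |
      ∃ m n : ℤ, p = m • ((t, v) : ℝ × AddCircle (2 * π)) + n • ((t', v') : ℝ × AddCircle (2 * π))}) :
    Dense {p : ℝ × AddCircle (2 * π) |
      ∃ m n : ℤ, 0 < m ∧ 0 < n ∧
        p = m • ((t, v) : ℝ × AddCircle (2 * π)) - n • ((t', v') : ℝ × AddCircle (2 * π))} := by
  refine Metric.dense_iff.2 fun x r hr => ?_
  obtain ⟨g, hgx, m₀, n₀, rfl⟩ := Metric.dense_iff.1 hdense x (r / 2) (half_pos hr)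
  obtain ⟨p, q, hp, hq, hpq⟩ :=
    exists_lt_lt_norm_zsmul_sub_zsmul_lt hpos hdense (half_pos hr) (max |m₀| |n₀|)
  set a : ℝ × AddCircle (2 * π) := (t, v)
  set b : ℝ × AddCircle (2 * π) := (t', v')
  refine ⟨(m₀ • a + n₀ • b) + (p • a - q • b), ?_, m₀ + p, q - n₀, ?_, ?_, ?_⟩
  · rw [Metric.mem_ball] at hgx ⊢
    calc dist (m₀ • a + n₀ • b + (p • a - q • b)) x
        ≤ dist (m₀ • a + n₀ • b + (p • a - q • b)) (m₀ • a + n₀ • b) + dist (m₀ • a + n₀ • b) x :=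
          dist_triangle _ _ _
      _ < r / 2 + r / 2 := by rw [dist_self_add_left]; exact add_lt_add hpq hgx
      _ = r := add_halves r
  · linarith [neg_abs_le m₀, le_max_left |m₀| |n₀|]
  · linarith [le_abs_self n₀, le_max_right |m₀| |n₀|]
  · rw [add_zsmul, sub_zsmul]
    abel

/-- If the subgroup generated by `(t,v)` and `(t',v')` is dense in ℝ × (ℝ/2πℤ) and
`t/t' > 0`, then the positive combinations `m(t,v) − n(t',v')`, `m,n > 0`, are dense. -/
theorem stmt_5 (t t' : ℝ) (v v' : AddCircle (2 * π)) (ht : t ≠ 0) (ht' : t' ≠ 0)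
    (hpos : 0 < t / t')
    (hdense : Dense {p : ℝ × AddCircle (2 * π) |
      ∃ m n : ℤ, p = m • ((t, v) : ℝ × AddCircle (2 * π)) + n • ((t', v') : ℝ × AddCircle (2 * π))}) :
    Dense {p : ℝ × AddCircle (2 * π) |
      ∃ m n : ℤ, 0 < m ∧ 0 < n ∧
        p = m • ((t, v) : ℝ × AddCircle (2 * π)) - n • ((t', v') : ℝ × AddCircle (2 * π))} :=
  stmt_5_general t t' v v' hpos hdense
end

section
/- Let {J_α}, {J'_α}, α ∈ A (A finite), be families of subsets of ℂ, with centers c_α, c'_α ∈ ℂ and constants λ, ε, ν > 0 such that B(c_α, ε) ⊆ J_α ⊆ B(c_α, λε), B(c'_α, ε) ⊆ J'_α, and |c_α − c'_α| ≤ νε for all α. Then Leb(∪_α J'_α) ≥ (1/(9(λ+ν)²))·Leb(∪_α J_α). -/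
/-!
Every set `J α` lies in the ball `B(c'_α, (λ+ν)ε)`. Among these balls, all of the same radius,
choose a maximal disjoint subfamily; every ball of the family meets one of the chosen balls and is
therefore contained in its threefold enlargement. The union of the `J α` is thus covered by the
enlargements `B(c'_β, 3(λ+ν)ε)`, whose measures are `9(λ+ν)²` times those of the pairwise
disjoint balls `B(c'_β, ε) ⊆ J'_β`.
-/

open Metric MeasureTheory Module

theorem Metric.le_of_ball_subset_ball {E : Type*} [NormedAddCommGroup E] [NormedSpace ℝ E]
    [Nontrivial E] {x : E} {r s : ℝ} (hr : 0 < r) (h : ball x r ⊆ ball x s) : r ≤ s := by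
  by_contra! hsr
  have hs : 0 ≤ s := (dist_nonneg.trans_lt (mem_ball.1 (h (mem_ball_self hr)))).le
  obtain ⟨y, hy⟩ := (NormedSpace.sphere_nonempty (x := x)).2 hs
  have hyx : dist y x = s := mem_sphere.1 hy
  exact (mem_ball.1 (h (mem_ball.2 (hyx ▸ hsr)))).ne hyx

theorem Vitali.exists_disjoint_subfamily_ball_subset_ball_three_mul {α ι : Type*}
    [PseudoMetricSpace α] (x : ι → α) {r : ℝ} (hr : 0 < r) :
    ∃ u : Set ι, u.PairwiseDisjoint (fun a => ball (x a) r) ∧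
      ∀ a, ∃ b ∈ u, ball (x a) r ⊆ ball (x b) (3 * r) := by
  obtain ⟨u, -, hdisj, hcover⟩ := Vitali.exists_disjoint_subfamily_covering_enlargement
    (fun a => ball (x a) r) Set.univ (fun _ => r) 2 one_lt_two (fun _ _ => hr.le) r
    (fun _ _ => le_rfl) (fun _ _ => nonempty_ball.2 hr)
  refine ⟨u, hdisj, fun a => ?_⟩
  obtain ⟨b, hb, ⟨z, hza, hzb⟩, -⟩ := hcover a (Set.mem_univ a)
  have hab : dist (x a) (x b) < 2 * r := by
    linarith [dist_triangle (x a) z (x b), mem_ball'.1 hza, mem_ball.1 hzb]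
  exact ⟨b, hb, ball_subset_ball' (by linarith)⟩

section AddHaar

variable {E : Type*} [NormedAddCommGroup E] [NormedSpace ℝ E] [FiniteDimensional ℝ E]
  [MeasurableSpace E] [BorelSpace E] (μ : Measure E) [μ.IsAddHaarMeasure]

theorem Measure.addHaar_iUnion_le_of_subset_ball_of_ball_subset {ι : Type*}
    {S T : ι → Set E} {x : ι → E} {r R : ℝ} (hr : 0 < r) (hrR : r ≤ R)
    (hS : ∀ i, S i ⊆ ball (x i) R) (hT : ∀ i, ball (x i) r ⊆ T i) :
    μ (⋃ i, S i) ≤ ENNReal.ofReal ((3 * R / r) ^ finrank ℝ E) * μ (⋃ i, T i) := by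
  have hR : 0 < R := hr.trans_le hrR
  obtain ⟨u, hdisjR, hcover⟩ := Vitali.exists_disjoint_subfamily_ball_subset_ball_three_mul x hR
  have hdisj : u.PairwiseDisjoint (fun b => ball (x b) r) :=
    hdisjR.mono fun b => ball_subset_ball hrR
  have hu : u.Countable :=
    hdisj.countable_of_isOpen (fun _ _ => isOpen_ball) (fun _ _ => nonempty_ball.2 hr)
  have hSu : (⋃ i, S i) ⊆ ⋃ b ∈ u, ball (x b) (3 * R) := Set.iUnion_subset fun i => by
    obtain ⟨b, hb, hsub⟩ := hcover i
    exact (hS i).trans <| hsub.trans <|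
      Set.subset_biUnion_of_mem (u := fun b => ball (x b) (3 * R)) hb
  have hscale : ∀ b, μ (ball (x b) (3 * R)) =
      ENNReal.ofReal ((3 * R / r) ^ finrank ℝ E) * μ (ball (x b) r) := fun b => by
    conv_lhs => rw [← div_mul_cancel₀ (3 * R) hr.ne']
    rw [Measure.addHaar_ball_mul_of_pos μ (x b) (by positivity),
      Measure.addHaar_ball_center μ (x b)]
  calc μ (⋃ i, S i) ≤ μ (⋃ b ∈ u, ball (x b) (3 * R)) := measure_mono hSu
    _ ≤ ∑' b : u, μ (ball (x b) (3 * R)) := measure_biUnion_le μ hu _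
    _ = ENNReal.ofReal ((3 * R / r) ^ finrank ℝ E) * ∑' b : u, μ (ball (x b) r) := by
      simp only [hscale, ENNReal.tsum_mul_left]
    _ = ENNReal.ofReal ((3 * R / r) ^ finrank ℝ E) * μ (⋃ b ∈ u, ball (x b) r) := by
      rw [measure_biUnion hu hdisj fun _ _ => measurableSet_ball]
    _ ≤ ENNReal.ofReal ((3 * R / r) ^ finrank ℝ E) * μ (⋃ i, T i) := by
      gcongr _ * μ ?_
      exact Set.iUnion₂_subset fun b _ => (hT b).trans (Set.subset_iUnion T b)

end AddHaar

theorem stmt_7_general {A : Type*} (J J' : A → Set ℂ) (c c' : A → ℂ)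
    (lam eps nu : ℝ) (heps : 0 < eps)
    (h1 : ∀ α, ball (c α) eps ⊆ J α) (h2 : ∀ α, J α ⊆ ball (c α) (lam * eps))
    (h3 : ∀ α, ball (c' α) eps ⊆ J' α) (h4 : ∀ α, dist (c α) (c' α) ≤ nu * eps) :
    ENNReal.ofReal (1 / (9 * (lam + nu) ^ 2)) * volume (⋃ α, J α) ≤ volume (⋃ α, J' α) := by
  rcases isEmpty_or_nonempty A with hA | ⟨⟨α₀⟩⟩
  · simp
  have hlam1 : 1 ≤ lam := by
    have := le_of_ball_subset_ball heps ((h1 α₀).trans (h2 α₀))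
    nlinarith
  have hnu0 : 0 ≤ nu := nonneg_of_mul_nonneg_left (dist_nonneg.trans (h4 α₀)) heps
  have hK : 0 < lam + nu := by linarith
  have hJ : ∀ α, J α ⊆ ball (c' α) ((lam + nu) * eps) := fun α =>
    (h2 α).trans (ball_subset_ball' (by linarith [h4 α]))
  have hcover := Measure.addHaar_iUnion_le_of_subset_ball_of_ball_subset volume heps
    (by nlinarith) hJ h3
  have hconst : (3 * ((lam + nu) * eps) / eps) ^ finrank ℝ ℂ = 9 * (lam + nu) ^ 2 := by
    rw [Complex.finrank_real_complex]
    field_simp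
    ring
  rw [hconst] at hcover
  calc ENNReal.ofReal (1 / (9 * (lam + nu) ^ 2)) * volume (⋃ α, J α)
      ≤ ENNReal.ofReal (1 / (9 * (lam + nu) ^ 2)) *
          (ENNReal.ofReal (9 * (lam + nu) ^ 2) * volume (⋃ α, J' α)) := by gcongr
    _ = volume (⋃ α, J' α) := by
      rw [← mul_assoc, ← ENNReal.ofReal_mul (by positivity), one_div_mul_cancel (by positivity),
        ENNReal.ofReal_one, one_mul]

/-- Comparison of measures of unions of comparable families of sets (lemma `lem:pb`,
first inequality). -/
theorem stmt_7 {A : Type*} [Fintype A] (J J' : A → Set ℂ) (c c' : A → ℂ)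
    (lam eps nu : ℝ) (hlam : 0 < lam) (heps : 0 < eps) (hnu : 0 < nu)
    (h1 : ∀ α, ball (c α) eps ⊆ J α) (h2 : ∀ α, J α ⊆ ball (c α) (lam * eps))
    (h3 : ∀ α, ball (c' α) eps ⊆ J' α) (h4 : ∀ α, dist (c α) (c' α) ≤ nu * eps) :
    ENNReal.ofReal (1 / (9 * (lam + nu) ^ 2)) * volume (⋃ α, J α) ≤ volume (⋃ α, J' α) :=
  stmt_7_general J J' c c' lam eps nu heps h1 h2 h3 h4
end

section
/- Let {J_α}, {K_α}, α ∈ A (A finite), be families of subsets of ℂ, with centers c_α and constants λ, ε, σ > 0 satisfying B(c_α, ε) ⊆ J_α ⊆ B(c_α, λε), K_α ⊆ J_α, and Leb(K_α) ≥ σ⁻¹·Leb(J_α) for all α. Then Leb(∪_α K_α) ≥ (σ⁻¹/(9λ²))·Leb(∪_α J_α). -/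
/-!
Take a maximal subfamily of the balls `B(c_α, λε)` that are pairwise disjoint. Since all radii
are equal, every ball of the family meets a selected one and hence lies in its threefold
enlargement, so the selected balls `B(c_β, 3λε)` cover `⋃ J_α`. By scaling,
`σ⁻¹/(9λ²) · Leb B(c_β, 3λε) = σ⁻¹ · Leb B(c_β, ε) ≤ Leb K_β`, and the `K_β` of the selected
indices are disjoint subsets of `⋃ K_α`.
-/

open Metric MeasureTheory

section Covering

variable {α ι : Type*}

theorem sum_measure_le_measure_biUnion_of_subset_pairwiseDisjoint [MeasurableSpace α]
    {μ : Measure α} {s : Finset ι}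
    {K B : ι → Set α} (hB : ∀ i ∈ s, MeasurableSet (B i))
    (hdisj : (s : Set ι).PairwiseDisjoint B) (hKB : ∀ i ∈ s, K i ⊆ B i) :
    ∑ i ∈ s, μ (K i) ≤ μ (⋃ i ∈ s, K i) := by
  set ν := μ.restrict (⋃ i ∈ s, K i)
  calc ∑ i ∈ s, μ (K i)
      ≤ ∑ i ∈ s, ν (B i) := Finset.sum_le_sum fun i hi => by
        rw [Measure.restrict_apply (hB i hi)]
        exact measure_mono (Set.subset_inter (hKB i hi) (Set.subset_biUnion_of_mem hi))
    _ = ν (⋃ i ∈ s, B i) := (measure_biUnion_finset hdisj hB).symm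
    _ ≤ ν Set.univ := measure_mono (Set.subset_univ _)
    _ = μ (⋃ i ∈ s, K i) := Measure.restrict_apply_univ _

variable [PseudoMetricSpace α]

theorem exists_pairwiseDisjoint_ball_subset_ball_three_mul (x : ι → α) (r : ℝ) :
    ∃ u : Set ι, u.PairwiseDisjoint (fun i => ball (x i) r) ∧
      ∀ a, ∃ b ∈ u, ball (x a) r ⊆ ball (x b) (3 * r) := by
  rcases le_or_gt r 0 with hr | hr
  · refine ⟨Set.univ, fun a _ b _ _ => ?_, fun a => ⟨a, trivial, ?_⟩⟩ <;>
      simp [ball_eq_empty.2 hr]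
  obtain ⟨u, -, hdisj, hmeet⟩ :=
    Vitali.exists_disjoint_subfamily_covering_enlargement (fun i => ball (x i) r) Set.univ
      (fun _ => r) 2 one_lt_two (fun _ _ => hr.le) r (fun _ _ => le_rfl)
      (fun i _ => ⟨x i, mem_ball_self hr⟩)
  refine ⟨u, hdisj, fun a => ?_⟩
  obtain ⟨b, hbu, hab, -⟩ := hmeet a trivial
  have hdist : dist (x a) (x b) < r + r := dist_lt_add_of_nonempty_ball_inter_ball hab
  exact ⟨b, hbu, ball_subset_ball' (by linarith)⟩

theorem mul_measure_iUnion_le_measure_iUnion_of_ball_three_mul [MeasurableSpace α]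
    [OpensMeasurableSpace α] {μ : Measure α} [Finite ι] {J K : ι → Set α} {c : ι → α} {r : ℝ}
    {δ : ENNReal}
    (hJ : ∀ i, J i ⊆ ball (c i) r) (hK : ∀ i, K i ⊆ ball (c i) r)
    (hKball : ∀ i, δ * μ (ball (c i) (3 * r)) ≤ μ (K i)) :
    δ * μ (⋃ i, J i) ≤ μ (⋃ i, K i) := by
  obtain ⟨u, hdisj, hcover⟩ := exists_pairwiseDisjoint_ball_subset_ball_three_mul c r
  lift u to Finset ι using u.toFinite
  have hJu : (⋃ i, J i) ⊆ ⋃ b ∈ u, ball (c b) (3 * r) := Set.iUnion_subset fun i => by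
    obtain ⟨b, hbu, hib⟩ := hcover i
    exact ((hJ i).trans hib).trans (Finset.subset_set_biUnion_of_mem
      (f := fun b => ball (c b) (3 * r)) hbu)
  calc δ * μ (⋃ i, J i)
      ≤ δ * ∑ b ∈ u, μ (ball (c b) (3 * r)) := by
        gcongr
        exact (measure_mono hJu).trans (measure_biUnion_finset_le u _)
    _ = ∑ b ∈ u, δ * μ (ball (c b) (3 * r)) := Finset.mul_sum _ _ _
    _ ≤ ∑ b ∈ u, μ (K b) := Finset.sum_le_sum fun b _ => hKball b
    _ ≤ μ (⋃ b ∈ u, K b) :=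
        sum_measure_le_measure_biUnion_of_subset_pairwiseDisjoint
          (fun _ _ => measurableSet_ball) hdisj fun b _ => hK b
    _ ≤ μ (⋃ i, K i) := measure_mono (Set.iUnion₂_subset fun b _ => Set.subset_iUnion K b)

end Covering

theorem Complex.volume_ball_mul (z : ℂ) {a : ℝ} (ha : 0 ≤ a) (r : ℝ) :
    volume (ball z (a * r)) = ENNReal.ofReal (a ^ 2) * volume (ball z r) := by
  rw [Measure.addHaar_ball_mul volume z ha, Complex.finrank_real_complex,
    Measure.addHaar_ball_center volume z r]

theorem stmt_8_general {A : Type*} [Fintype A] (J K : A → Set ℂ) (c : A → ℂ)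
    (lam eps sig : ℝ) (hlam : 0 < lam)
    (h1 : ∀ α, ball (c α) eps ⊆ J α) (h2 : ∀ α, J α ⊆ ball (c α) (lam * eps))
    (h3 : ∀ α, K α ⊆ J α)
    (h4 : ∀ α, ENNReal.ofReal sig⁻¹ * volume (J α) ≤ volume (K α)) :
    ENNReal.ofReal (sig⁻¹ / (9 * lam ^ 2)) * volume (⋃ α, J α) ≤ volume (⋃ α, K α) := by
  refine mul_measure_iUnion_le_measure_iUnion_of_ball_three_mul h2
    (fun α => (h3 α).trans (h2 α)) fun α => ?_
  calc ENNReal.ofReal (sig⁻¹ / (9 * lam ^ 2)) * volume (ball (c α) (3 * (lam * eps)))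
      = ENNReal.ofReal (sig⁻¹ / (9 * lam ^ 2)) *
          (ENNReal.ofReal ((3 * lam) ^ 2) * volume (ball (c α) eps)) := by
        rw [← Complex.volume_ball_mul _ (by positivity), mul_assoc]
    _ = ENNReal.ofReal sig⁻¹ * volume (ball (c α) eps) := by
        rw [← mul_assoc, ← ENNReal.ofReal_mul' (by positivity)]
        congr 2
        field_simp
        ring
    _ ≤ ENNReal.ofReal sig⁻¹ * volume (J α) := by gcongr; exact h1 α
    _ ≤ volume (K α) := h4 α

/-- Comparison of measures of unions (lemma `lem:pb`, second inequality): if each `K_α`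
fills a fixed proportion of `J_α`, the union of the `K_α` fills a fixed proportion of the
union of the `J_α`. -/
theorem stmt_8 {A : Type*} [Fintype A] (J K : A → Set ℂ) (c : A → ℂ)
    (lam eps sig : ℝ) (hlam : 0 < lam) (heps : 0 < eps) (hsig : 0 < sig)
    (h1 : ∀ α, ball (c α) eps ⊆ J α) (h2 : ∀ α, J α ⊆ ball (c α) (lam * eps))
    (h3 : ∀ α, K α ⊆ J α)
    (h4 : ∀ α, ENNReal.ofReal sig⁻¹ * volume (J α) ≤ volume (K α)) :
    ENNReal.ofReal (sig⁻¹ / (9 * lam ^ 2)) * volume (⋃ α, J α) ≤ volume (⋃ α, K α) :=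
  stmt_8_general J K c lam eps sig hlam h1 h2 h3 h4
end

section
/- Projection-slicing estimate: fix R > 0 and let J_R = { s ∈ ℂ : e^{−R} ≤ |s| ≤ e^{R} }. For s ∈ ℂ define π_s : ℂ² → ℂ by π_s(u₁,u₂) = u₂ − s·u₁. Then there is a constant c > 0 depending only on R such that for all u, v ∈ ℂ² with u ≠ v and all δ > 0, Leb({ s ∈ J_R : |π_s(u) − π_s(v)| < δ }) ≤ c·δ²·|u − v|⁻², where Leb is planar Lebesgue measure on ℂ. -/
/-!
Write `π_s(u) - π_s(v) = b - s a` with `(a, b) = u - v`. The slice `{s : |b - s a| < δ}` is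
the disc of radius `δ / |a|` about `b / a`, while `|s| ≤ e^R` confines it to a disc of radius
`e^R`. So its area is at most `π (1 + e^R)² (δ / M)²` with `M = max |a| δ`, and as soon as the slice
meets the disc `|s| ≤ e^R` we have `|b| ≤ δ + e^R |a|`, whence `|a|² + |b|² ≲ M²`.
-/

open MeasureTheory Metric Real

lemma Complex.volume_closedBall_eq_ofReal (x : ℂ) {r : ℝ} (hr : 0 ≤ r) :
    volume (closedBall x r) = ENNReal.ofReal (π * r ^ 2) := by
  rw [Complex.volume_closedBall, ← ENNReal.ofReal_pow hr, ← ENNReal.ofReal_coe_nnreal,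
    NNReal.coe_real_pi, ← ENNReal.ofReal_mul (by positivity), mul_comm]

lemma setOf_norm_sub_mul_lt_eq_ball {a : ℂ} (ha : a ≠ 0) (b : ℂ) (δ : ℝ) :
    {s : ℂ | ‖b - s * a‖ < δ} = ball (b / a) (δ / ‖a‖) := by
  ext s
  have hsa : s - b / a = -(b - s * a) / a := by field_simp; ring
  rw [Set.mem_ofPred_eq, mem_ball, Complex.dist_eq, hsa, norm_div, norm_neg,
    div_lt_div_iff_of_pos_right (norm_pos_iff.mpr ha)]

lemma volume_slice_le (a b : ℂ) {E δ : ℝ} (hE : 0 ≤ E) (hδ : 0 < δ) :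
    volume {s : ℂ | ‖s‖ ≤ E ∧ ‖b - s * a‖ < δ} ≤
      ENNReal.ofReal (π * (1 + E) ^ 2 * (δ / max ‖a‖ δ) ^ 2) := by
  rcases le_or_gt ‖a‖ δ with h | h
  · rw [max_eq_right h, div_self hδ.ne', one_pow, mul_one]
    calc _ ≤ volume (closedBall (0 : ℂ) E) :=
          measure_mono fun s hs => by simpa using hs.1
      _ = ENNReal.ofReal (π * E ^ 2) := Complex.volume_closedBall_eq_ofReal 0 hE
      _ ≤ _ := ENNReal.ofReal_le_ofReal (by gcongr; linarith)
  · have ha : a ≠ 0 := norm_pos_iff.mp (hδ.trans h)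
    rw [max_eq_left h.le]
    calc _ ≤ volume (closedBall (b / a) (δ / ‖a‖)) := measure_mono fun s hs =>
          ball_subset_closedBall <| (setOf_norm_sub_mul_lt_eq_ball ha b δ).subset hs.2
      _ = ENNReal.ofReal (π * (δ / ‖a‖) ^ 2) :=
          Complex.volume_closedBall_eq_ofReal _ (by positivity)
      _ ≤ _ := ENNReal.ofReal_le_ofReal (by
          rw [mul_right_comm]
          exact le_mul_of_one_le_right (by positivity) (by nlinarith))

lemma norm_sq_add_norm_sq_le_of_norm_sub_mul_lt {a b s : ℂ} {E δ : ℝ} (hs : ‖s‖ ≤ E)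
    (hsab : ‖b - s * a‖ < δ) :
    ‖a‖ ^ 2 + ‖b‖ ^ 2 ≤ (1 + (1 + E) ^ 2) * max ‖a‖ δ ^ 2 := by
  have hE : 0 ≤ E := (norm_nonneg s).trans hs
  have ha : ‖a‖ ≤ max ‖a‖ δ := le_max_left _ _
  have hb : ‖b‖ ≤ (1 + E) * max ‖a‖ δ :=
    calc ‖b‖ ≤ ‖b - s * a‖ + ‖s‖ * ‖a‖ := by
          simpa [norm_mul] using norm_le_norm_sub_add b (s * a)
      _ ≤ δ + E * ‖a‖ := by gcongr
      _ ≤ (1 + E) * max ‖a‖ δ := by nlinarith [le_max_right ‖a‖ δ]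
  have ha2 := pow_le_pow_left₀ (norm_nonneg a) ha 2
  have hb2 := pow_le_pow_left₀ (norm_nonneg b) hb 2
  nlinarith

theorem volume_slice_le_of_ne_zero {a b : ℂ} (hab : (a, b) ≠ 0) {E δ : ℝ} (hE : 0 ≤ E)
    (hδ : 0 < δ) :
    volume {s : ℂ | ‖s‖ ≤ E ∧ ‖b - s * a‖ < δ} ≤
      ENNReal.ofReal
        (π * (1 + E) ^ 2 * (1 + (1 + E) ^ 2) * δ ^ 2 / (‖a‖ ^ 2 + ‖b‖ ^ 2)) := by
  rcases Set.eq_empty_or_nonempty {s : ℂ | ‖s‖ ≤ E ∧ ‖b - s * a‖ < δ}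
    with h | ⟨s, hs, hsab⟩
  · simp [h]
  have hD : 0 < ‖a‖ ^ 2 + ‖b‖ ^ 2 := by
    have : a ≠ 0 ∨ b ≠ 0 := by contrapose! hab; simp [hab]
    rcases this with ha | hb
    · have := norm_pos_iff.mpr ha; positivity
    · have := norm_pos_iff.mpr hb; positivity
  have hM : 0 < max ‖a‖ δ := hδ.trans_le (le_max_right _ _)
  refine (volume_slice_le a b hE hδ).trans (ENNReal.ofReal_le_ofReal ?_)
  rw [div_pow, le_div_iff₀ hD]
  calc π * (1 + E) ^ 2 * (δ ^ 2 / max ‖a‖ δ ^ 2) * (‖a‖ ^ 2 + ‖b‖ ^ 2)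
      ≤ π * (1 + E) ^ 2 * (δ ^ 2 / max ‖a‖ δ ^ 2) *
          ((1 + (1 + E) ^ 2) * max ‖a‖ δ ^ 2) := by
        gcongr
        exact norm_sq_add_norm_sq_le_of_norm_sub_mul_lt hs hsab
    _ = π * (1 + E) ^ 2 * (1 + (1 + E) ^ 2) * δ ^ 2 := by field_simp

theorem stmt_10_general (R : ℝ) :
    ∃ c : ℝ, 0 < c ∧ ∀ (u v : ℂ × ℂ), u ≠ v → ∀ δ : ℝ, 0 < δ →
      volume {s : ℂ | (Real.exp (-R) ≤ ‖s‖ ∧ ‖s‖ ≤ Real.exp R) ∧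
          ‖(u.2 - s * u.1) - (v.2 - s * v.1)‖ < δ}
        ≤ ENNReal.ofReal (c * δ ^ 2 /
            (‖u.1 - v.1‖ ^ 2 + ‖u.2 - v.2‖ ^ 2)) := by
  refine ⟨π * (1 + exp R) ^ 2 * (1 + (1 + exp R) ^ 2), by positivity, fun u v huv δ hδ => ?_⟩
  have hsub : {s : ℂ | (exp (-R) ≤ ‖s‖ ∧ ‖s‖ ≤ exp R) ∧
      ‖(u.2 - s * u.1) - (v.2 - s * v.1)‖ < δ} ⊆
        {s : ℂ | ‖s‖ ≤ exp R ∧ ‖(u - v).2 - s * (u - v).1‖ < δ} :=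
    fun s hs => ⟨hs.1.2, by
      simpa only [Prod.fst_sub, Prod.snd_sub, mul_sub, sub_sub_sub_comm] using hs.2⟩
  exact (measure_mono hsub).trans
    (volume_slice_le_of_ne_zero (sub_ne_zero.mpr huv) (exp_pos R).le hδ)

/-- Transversality/slicing estimate for the family of projections
`π_s(u₁,u₂) = u₂ − s·u₁`, `s` in the annulus `J_R`. -/
theorem stmt_10 (R : ℝ) (hR : 0 < R) :
    ∃ c : ℝ, 0 < c ∧ ∀ (u v : ℂ × ℂ), u ≠ v → ∀ δ : ℝ, 0 < δ →
      volume {s : ℂ | (Real.exp (-R) ≤ ‖s‖ ∧ ‖s‖ ≤ Real.exp R) ∧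
          ‖(u.2 - s * u.1) - (v.2 - s * v.1)‖ < δ}
        ≤ ENNReal.ofReal (c * δ ^ 2 /
            (‖u.1 - v.1‖ ^ 2 + ‖u.2 - v.2‖ ^ 2)) :=
  stmt_10_general R
end
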